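/- arXiv:gr-qc/0606015 — 3 statements merged into one kernel-verified Lean document; each statement's English description precedes it below -/
import Mathlib

section
/- Let 𝒰 be a unitary SD bivector and F a complex 2-form orthogonal to 𝒰, i.e. (F,𝒰) = 0. Then [F,𝒰] = 0 if and only if F is anti-self-dual (*F = -i·F); moreover [F,𝒰]·𝒰 equals the self-dual part (1/2)(F - i·*F) of F. (The algebraic core of the Dietz–Rüdiger criterion used in Section 5: since 𝒵 = (1/2)[dχ,𝒰] and (dχ,𝒰) = 0, a space-time with two shear-free geodesic null congruences is type D if and only if dχ is anti-self-dual.) -/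
open Matrix

noncomputable section

/-- The Minkowski metric `η = diag(-1,1,1,1)` as a 4×4 complex matrix. -/
def eta : Matrix (Fin 4) (Fin 4) ℂ := Matrix.diagonal ![-1, 1, 1, 1]

/-- The metric product `A·B := A η B`. -/
def mdot (A B : Matrix (Fin 4) (Fin 4) ℂ) : Matrix (Fin 4) (Fin 4) ℂ := A * eta * B

/-- The commutator `[A,B] := A·B - B·A`. -/
def mcomm (A B : Matrix (Fin 4) (Fin 4) ℂ) : Matrix (Fin 4) (Fin 4) ℂ := mdot A B - mdot B A

/-- The anticommutator `{A,B} := A·B + B·A`. -/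
def manti (A B : Matrix (Fin 4) (Fin 4) ℂ) : Matrix (Fin 4) (Fin 4) ℂ := mdot A B + mdot B A

/-- The scalar product `(A,B) := (1/2)·tr(A η Bᵀ η)`. -/
def mprod (A B : Matrix (Fin 4) (Fin 4) ℂ) : ℂ := (1/2) * (A * eta * Bᵀ * eta).trace

/-- Sign of an integer, valued in `ℂ`. -/
def sgnZ (x : ℤ) : ℂ := if 0 < x then 1 else if x < 0 then -1 else 0

/-- The Levi-Civita symbol on `Fin 4`. -/
def eps (a b c d : Fin 4) : ℂ :=
  sgnZ ((b : ℤ) - a) * sgnZ ((c : ℤ) - a) * sgnZ ((d : ℤ) - a) *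
  sgnZ ((c : ℤ) - b) * sgnZ ((d : ℤ) - b) * sgnZ ((d : ℤ) - c)

/-- The Hodge dual of a 2-form:
`(*F)_{αβ} := (1/2)·Σ ε(α,β,γ,δ)·η_{γμ}·η_{δν}·F_{μν}`. -/
def hodge (F : Matrix (Fin 4) (Fin 4) ℂ) : Matrix (Fin 4) (Fin 4) ℂ :=
  Matrix.of fun α β => (1/2) * ∑ γ : Fin 4, ∑ δ : Fin 4, ∑ μ : Fin 4, ∑ ν : Fin 4,
    eps α β γ δ * eta γ μ * eta δ ν * F μ ν

/-- A 2-form is an antisymmetric matrix. -/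
def IsTwoForm (F : Matrix (Fin 4) (Fin 4) ℂ) : Prop := Fᵀ = -F

/-- A self-dual 2-form: `*F = i·F`. -/
def SelfDual (F : Matrix (Fin 4) (Fin 4) ℂ) : Prop :=
  IsTwoForm F ∧ hodge F = Complex.I • F

/-- An anti-self-dual 2-form: `*F = -i·F`. -/
def AntiSelfDual (F : Matrix (Fin 4) (Fin 4) ℂ) : Prop :=
  IsTwoForm F ∧ hodge F = (-Complex.I) • F

/-- A unitary SD bivector: a self-dual 2-form with `(𝒰,𝒰) = -1`. -/
def UnitarySD (U : Matrix (Fin 4) (Fin 4) ℂ) : Prop := SelfDual U ∧ mprod U U = -1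

/-- A matrix with real entries. -/
def RealEntries (F : Matrix (Fin 4) (Fin 4) ℂ) : Prop := ∀ i j, (F i j).im = 0

/-- A real unitary simple 2-form: real, `(U,U) = -1`, `(U,*U) = 0`. -/
def RealUnitarySimple (U : Matrix (Fin 4) (Fin 4) ℂ) : Prop :=
  IsTwoForm U ∧ RealEntries U ∧ mprod U U = -1 ∧ mprod U (hodge U) = 0

/-- The canonical SD bivector `𝒰 := (U - i·*U)/√2` of a real unitary simple 2-form. -/
def calU (U : Matrix (Fin 4) (Fin 4) ℂ) : Matrix (Fin 4) (Fin 4) ℂ :=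
  ((Real.sqrt 2 : ℂ))⁻¹ • (U - Complex.I • hodge U)

/-- Entrywise complex conjugation. -/
def mconj (F : Matrix (Fin 4) (Fin 4) ℂ) : Matrix (Fin 4) (Fin 4) ℂ :=
  F.map (starRingEnd ℂ)

end
open Complex in
/-- General antisymmetric matrix. -/
def tfM (a b c d e f : ℂ) : Matrix (Fin 4) (Fin 4) ℂ :=
  !![0, a, b, c; -a, 0, f, -e; -b, -f, 0, d; -c, e, -d, 0]

lemma fmk2 : (⟨2, by omega⟩ : Fin 4) = 2 := rfl
lemma fmk3 : (⟨3, by omega⟩ : Fin 4) = 3 := rfl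
lemma fmk0 : (⟨0, by omega⟩ : Fin 4) = 0 := rfl
lemma fmk1 : (⟨1, by omega⟩ : Fin 4) = 1 := rfl
lemma fv0 : (0 : Fin 4).val = 0 := rfl
lemma fv1 : (1 : Fin 4).val = 1 := rfl
lemma fv2 : (2 : Fin 4).val = 2 := rfl
lemma fv3 : (3 : Fin 4).val = 3 := rfl

theorem tfM_eq (F : Matrix (Fin 4) (Fin 4) ℂ) (hF : IsTwoForm F) :
    F = tfM (F 0 1) (F 0 2) (F 0 3) (F 2 3) (F 3 1) (F 1 2) := by
  have h : ∀ i j, F j i = -F i j := fun i j => congrFun (congrFun hF i) j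
  ext i j
  fin_cases i <;> fin_cases j <;> simp only [tfM] <;>
    norm_num [Matrix.cons_val', Matrix.cons_val_two, Matrix.cons_val_three, Matrix.vecHead, Matrix.vecTail, Matrix.cons_val_zero, Matrix.cons_val_one, Matrix.head_cons,
      fmk0, fmk1, fmk2, fmk3,
      Matrix.empty_val', Matrix.cons_val_fin_one, Matrix.head_fin_const] <;>
    first
      | rfl
      | linear_combination (1/2) * h 0 0
      | linear_combination (1/2) * h 1 1
      | linear_combination (1/2) * h 2 2
      | linear_combination (1/2) * h 3 3
      | linear_combination h 0 1
      | linear_combination h 0 2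
      | linear_combination h 0 3
      | linear_combination h 2 3
      | linear_combination h 3 1
      | linear_combination h 1 2

lemma eta_diag_ne {i j : Fin 4} (h : i ≠ j) : eta i j = 0 := by
  simp [eta, Matrix.diagonal_apply_ne _ h]

lemma hodge_apply (F : Matrix (Fin 4) (Fin 4) ℂ) (α β : Fin 4) :
    hodge F α β = (1/2) * ∑ γ : Fin 4, ∑ δ : Fin 4,
      eps α β γ δ * eta γ γ * eta δ δ * F γ δ := by
  have inner : ∀ γ δ : Fin 4,
      (∑ μ : Fin 4, ∑ ν : Fin 4, eps α β γ δ * eta γ μ * eta δ ν * F μ ν)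
        = eps α β γ δ * eta γ γ * eta δ δ * F γ δ := fun γ δ => by
    rw [Finset.sum_eq_single γ
        (fun μ _ hμ => Finset.sum_eq_zero fun ν _ => by
          rw [eta_diag_ne (Ne.symm hμ)]; ring)
        (fun h => absurd (Finset.mem_univ γ) h),
      Finset.sum_eq_single δ
        (fun ν _ hν => by rw [eta_diag_ne (Ne.symm hν)]; ring)
        (fun h => absurd (Finset.mem_univ δ) h)]
  show (1/2 : ℂ) * ∑ γ : Fin 4, ∑ δ : Fin 4, ∑ μ : Fin 4, ∑ ν : Fin 4,
      eps α β γ δ * eta γ μ * eta δ ν * F μ ν = _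
  simp only [inner]

set_option maxHeartbeats 2000000 in
theorem hodge_tfM (a b c d e f : ℂ) :
    hodge (tfM a b c d e f) = tfM d e f (-a) (-b) (-c) := by
  ext i j
  fin_cases i <;> fin_cases j <;> rw [hodge_apply]
  all_goals
    norm_num [eps, sgnZ, eta, tfM, Matrix.diagonal, Fin.sum_univ_four,
      fmk0, fmk1, fmk2, fmk3, fv0, fv1, fv2, fv3,
      Matrix.cons_val', Matrix.cons_val_two, Matrix.cons_val_three, Matrix.vecHead, Matrix.vecTail, Matrix.cons_val_zero,
      Matrix.cons_val_one, Matrix.head_cons,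
      Matrix.empty_val', Matrix.cons_val_fin_one, Matrix.head_fin_const]
  all_goals try split_ifs
  all_goals try ring1
  all_goals exfalso
  all_goals
    first
      | exact absurd (by decide) ‹_›
      | exact absurd ‹_› (by decide)
      | omega

/-- entry access -/
lemma tfM01 (a b c d e f : ℂ) : tfM a b c d e f 0 1 = a := rfl
lemma tfM02 (a b c d e f : ℂ) : tfM a b c d e f 0 2 = b := rfl
lemma tfM03 (a b c d e f : ℂ) : tfM a b c d e f 0 3 = c := rfl
lemma tfM23 (a b c d e f : ℂ) : tfM a b c d e f 2 3 = d := rfl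
lemma tfM31 (a b c d e f : ℂ) : tfM a b c d e f 3 1 = e := rfl
lemma tfM12 (a b c d e f : ℂ) : tfM a b c d e f 1 2 = f := rfl

lemma tfM_smul (z a b c d e f : ℂ) :
    z • tfM a b c d e f = tfM (z*a) (z*b) (z*c) (z*d) (z*e) (z*f) := by
  ext i j
  fin_cases i <;> fin_cases j <;>
    simp [tfM, fmk0, fmk1, fmk2, fmk3] <;> ring

lemma tfM_add (a b c d e f a' b' c' d' e' f' : ℂ) :
    tfM a b c d e f + tfM a' b' c' d' e' f'
      = tfM (a+a') (b+b') (c+c') (d+d') (e+e') (f+f') := by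
  ext i j
  fin_cases i <;> fin_cases j <;>
    simp [tfM, fmk0, fmk1, fmk2, fmk3] <;> ring

lemma tfM_zero : tfM 0 0 0 0 0 0 = 0 := by
  ext i j
  fin_cases i <;> fin_cases j <;>
    norm_num [tfM, fmk0, fmk1, fmk2, fmk3, Matrix.zero_apply, Matrix.vecHead, Matrix.vecTail,
      Matrix.cons_val', Matrix.cons_val_two, Matrix.cons_val_three, Matrix.cons_val_zero,
      Matrix.cons_val_one, Matrix.head_cons,
      Matrix.empty_val', Matrix.cons_val_fin_one, Matrix.head_fin_const]

set_option maxHeartbeats 1000000 in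
lemma mprod_tfM (a b c d e f a' b' c' d' e' f' : ℂ) :
    mprod (tfM a b c d e f) (tfM a' b' c' d' e' f')
      = -(a*a' + b*b' + c*c') + (d*d' + e*e' + f*f') := by
  simp only [mprod, Matrix.trace, Matrix.diag_apply, Matrix.mul_apply,
    Matrix.transpose_apply, Fin.sum_univ_four, eta, tfM, Matrix.diagonal]
  norm_num [fmk0, fmk1, fmk2, fmk3, Fin.ext_iff, fv0, fv1, fv2, fv3,
    Matrix.cons_val', Matrix.cons_val_two, Matrix.cons_val_three, Matrix.vecHead, Matrix.vecTail, Matrix.cons_val_zero, Matrix.cons_val_one, Matrix.head_cons,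
    Matrix.empty_val', Matrix.cons_val_fin_one, Matrix.head_fin_const]
  ring

open Complex in
/-- self-dual bivector with components (a,b,c) -/
def sdM (a b c : ℂ) : Matrix (Fin 4) (Fin 4) ℂ := tfM a b c (I*a) (I*b) (I*c)

open Complex in
def asdM (a b c : ℂ) : Matrix (Fin 4) (Fin 4) ℂ := tfM a b c (-(I*a)) (-(I*b)) (-(I*c))

set_option maxHeartbeats 2000000 in
/-- anticommutator of self-dual bivectors -/
lemma sd_anti (a1 a2 a3 b1 b2 b3 : ℂ) :
    mdot (sdM a1 a2 a3) (sdM b1 b2 b3) + mdot (sdM b1 b2 b3) (sdM a1 a2 a3)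
      = (2*(a1*b1 + a2*b2 + a3*b3)) • eta := by
  ext i j
  fin_cases i <;> fin_cases j <;>
    simp only [sdM, mdot, Matrix.add_apply, Matrix.smul_apply, Matrix.mul_apply,
      Fin.sum_univ_four, eta, tfM, Matrix.diagonal] <;>
    norm_num [fmk0, fmk1, fmk2, fmk3, Fin.ext_iff, fv0, fv1, fv2, fv3,
      Matrix.cons_val', Matrix.cons_val_two, Matrix.cons_val_three, Matrix.vecHead, Matrix.vecTail, Matrix.cons_val_zero, Matrix.cons_val_one, Matrix.head_cons,
      Matrix.empty_val', Matrix.cons_val_fin_one, Matrix.head_fin_const]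
  all_goals ring_nf
  all_goals simp only [Complex.I_sq]
  all_goals first | rfl | ring1 | norm_num

set_option maxHeartbeats 2000000 in
/-- anti-self-dual commutes with self-dual -/
lemma asd_sd_comm (g1 g2 g3 a1 a2 a3 : ℂ) :
    mcomm (asdM g1 g2 g3) (sdM a1 a2 a3) = 0 := by
  ext i j
  fin_cases i <;> fin_cases j <;>
    simp only [asdM, sdM, mcomm, mdot, Matrix.sub_apply, Matrix.zero_apply, Matrix.mul_apply,
      Fin.sum_univ_four, eta, tfM, Matrix.diagonal] <;>
    norm_num [fmk0, fmk1, fmk2, fmk3, Fin.ext_iff, fv0, fv1, fv2, fv3,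
      Matrix.cons_val', Matrix.cons_val_two, Matrix.cons_val_three, Matrix.vecHead, Matrix.vecTail, Matrix.cons_val_zero, Matrix.cons_val_one, Matrix.head_cons,
      Matrix.empty_val', Matrix.cons_val_fin_one, Matrix.head_fin_const]
  all_goals ring_nf
  all_goals simp only [Complex.I_sq]
  all_goals first | rfl | ring1 | norm_num

open Complex in
/-- decomposition of a general 2-form into SD + ASD parts -/
lemma tfM_decomp (p1 p2 p3 p4 p5 p6 : ℂ) :
    tfM p1 p2 p3 p4 p5 p6
      = sdM ((p1 - I*p4)/2) ((p2 - I*p5)/2) ((p3 - I*p6)/2)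
        + asdM ((p1 + I*p4)/2) ((p2 + I*p5)/2) ((p3 + I*p6)/2) := by
  ext i j
  fin_cases i <;> fin_cases j <;>
    norm_num [sdM, asdM, tfM, Matrix.add_apply, fmk0, fmk1, fmk2, fmk3,
      Matrix.cons_val', Matrix.cons_val_two, Matrix.cons_val_three, Matrix.vecHead, Matrix.vecTail, Matrix.cons_val_zero, Matrix.cons_val_one, Matrix.head_cons,
      Matrix.empty_val', Matrix.cons_val_fin_one, Matrix.head_fin_const]
  all_goals ring_nf
  all_goals simp only [Complex.I_sq]
  all_goals first | rfl | ring1 | norm_num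

lemma eta_mul_eta : (eta * eta : Matrix (Fin 4) (Fin 4) ℂ) = 1 := by
  ext i j
  fin_cases i <;> fin_cases j <;>
    simp [eta, Matrix.mul_apply, Fin.sum_univ_four, Matrix.diagonal, Matrix.one_apply,
      fmk0, fmk1, fmk2, fmk3, fv0, fv1, fv2, fv3]
lemma mdot_add_left (A B C : Matrix (Fin 4) (Fin 4) ℂ) :
    mdot (A + B) C = mdot A C + mdot B C := by
  simp [mdot, Matrix.add_mul]

lemma mcomm_add_left (A B C : Matrix (Fin 4) (Fin 4) ℂ) :
    mcomm (A + B) C = mcomm A C + mcomm B C := by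
  simp only [mcomm, mdot, Matrix.add_mul, Matrix.mul_add]; abel

lemma mdot_smul_left (c : ℂ) (A B : Matrix (Fin 4) (Fin 4) ℂ) :
    mdot (c • A) B = c • mdot A B := by
  simp [mdot, Matrix.smul_mul]

lemma mdot_smul_right (c : ℂ) (A B : Matrix (Fin 4) (Fin 4) ℂ) :
    mdot A (c • B) = c • mdot A B := by
  simp [mdot, Matrix.mul_smul]

lemma mdot_assoc (A B C : Matrix (Fin 4) (Fin 4) ℂ) :
    mdot (mdot A B) C = mdot A (mdot B C) := by
  simp [mdot, Matrix.mul_assoc]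

lemma mdot_eta (A : Matrix (Fin 4) (Fin 4) ℂ) : mdot A eta = A := by
  rw [mdot, Matrix.mul_assoc, eta_mul_eta, Matrix.mul_one]

lemma mdot_zero_left (B : Matrix (Fin 4) (Fin 4) ℂ) : mdot 0 B = 0 := by
  simp [mdot]

lemma mcomm_two (A B : Matrix (Fin 4) (Fin 4) ℂ) :
    mcomm A B = (2:ℂ) • mdot A B - (mdot A B + mdot B A) := by
  rw [two_smul]; simp only [mcomm]; abel

open Complex in
lemma half_smul_eq_sdM (p1 p2 p3 p4 p5 p6 : ℂ) :
    (1/2 : ℂ) • (tfM p1 p2 p3 p4 p5 p6 - Complex.I • tfM p4 p5 p6 (-p1) (-p2) (-p3))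
      = sdM ((p1 - I*p4)/2) ((p2 - I*p5)/2) ((p3 - I*p6)/2) := by
  ext i j
  fin_cases i <;> fin_cases j <;>
    norm_num [sdM, tfM, Matrix.sub_apply, Matrix.smul_apply, fmk0, fmk1, fmk2, fmk3,
      Matrix.cons_val', Matrix.cons_val_two, Matrix.cons_val_three, Matrix.vecHead, Matrix.vecTail, Matrix.cons_val_zero, Matrix.cons_val_one, Matrix.head_cons,
      Matrix.empty_val', Matrix.cons_val_fin_one, Matrix.head_fin_const]
  all_goals ring_nf
  all_goals simp only [Complex.I_sq]
  all_goals first | rfl | ring1 | norm_num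

lemma sdM_zero : sdM 0 0 0 = 0 := by
  rw [sdM, mul_zero, ← tfM_zero]

/-- Dietz–Rüdiger criterion, algebraic core: for a unitary SD bivector `𝒰`
and a complex 2-form `F` with `(F,𝒰) = 0`: `[F,𝒰] = 0` iff `F` is anti-self-dual, and
moreover `[F,𝒰]·𝒰` equals the self-dual part `(1/2)(F - i·*F)` of `F`. -/
theorem dietz_rudiger_criterion
    (𝒰 F : Matrix (Fin 4) (Fin 4) ℂ) (h𝒰 : UnitarySD 𝒰) (hF : IsTwoForm F)
    (horth : mprod F 𝒰 = 0) :
    (mcomm F 𝒰 = 0 ↔ hodge F = (-Complex.I) • F) ∧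
    mdot (mcomm F 𝒰) 𝒰 = (1/2 : ℂ) • (F - Complex.I • hodge F) := by
  obtain ⟨⟨hU2, hUsd⟩, hUn⟩ := h𝒰
  have hUeq := tfM_eq 𝒰 hU2
  have hFeq := tfM_eq F hF
  set u1 := 𝒰 0 1 with hu1
  set u2 := 𝒰 0 2 with hu2
  set u3 := 𝒰 0 3 with hu3
  set u4 := 𝒰 2 3 with hu4
  set u5 := 𝒰 3 1 with hu5
  set u6 := 𝒰 1 2 with hu6
  set p1 := F 0 1 with hp1
  set p2 := F 0 2 with hp2
  set p3 := F 0 3 with hp3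
  set p4 := F 2 3 with hp4'
  set p5 := F 3 1 with hp5'
  set p6 := F 1 2 with hp6'
  -- self-duality of 𝒰 in components
  have hh : tfM u4 u5 u6 (-u1) (-u2) (-u3)
      = tfM (Complex.I * u1) (Complex.I * u2) (Complex.I * u3)
          (Complex.I * u4) (Complex.I * u5) (Complex.I * u6) := by
    rw [← hodge_tfM, ← hUeq, hUsd, hUeq, tfM_smul]
  have h4 : u4 = Complex.I * u1 := congrFun (congrFun hh 0) 1
  have h5 : u5 = Complex.I * u2 := congrFun (congrFun hh 0) 2
  have h6 : u6 = Complex.I * u3 := congrFun (congrFun hh 0) 3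
  have hU : 𝒰 = sdM u1 u2 u3 := by
    rw [hUeq, h4, h5, h6]; rfl
  -- normalization in components
  have hn : u1 * u1 + u2 * u2 + u3 * u3 = 1/2 := by
    have h := hUn
    rw [hU] at h
    simp only [sdM] at h
    rw [mprod_tfM] at h
    linear_combination (-1/2) * h + ((u1*u1 + u2*u2 + u3*u3)/2) * Complex.I_sq
  -- orthogonality in components
  have ho : (p1 - Complex.I * p4)/2 * u1 + (p2 - Complex.I * p5)/2 * u2
      + (p3 - Complex.I * p6)/2 * u3 = 0 := by
    have h := horth
    rw [hU, hFeq] at h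
    simp only [sdM] at h
    rw [mprod_tfM] at h
    linear_combination (-1/2) * h
  -- the commutator
  have hcomm : mcomm F 𝒰 = (2:ℂ) • mdot
      (sdM ((p1 - Complex.I * p4)/2) ((p2 - Complex.I * p5)/2)
        ((p3 - Complex.I * p6)/2)) (sdM u1 u2 u3) := by
    conv_lhs => rw [hFeq, tfM_decomp, hU, mcomm_add_left, asd_sd_comm, add_zero, mcomm_two,
      sd_anti, ho]
    rw [mul_zero, zero_smul, sub_zero]
  -- mdot 𝒰 𝒰
  have hUU : mdot (sdM u1 u2 u3) (sdM u1 u2 u3)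
      = (u1 * u1 + u2 * u2 + u3 * u3) • eta := by
    have h := sd_anti u1 u2 u3 u1 u2 u3
    have h2 : (2:ℂ) • mdot (sdM u1 u2 u3) (sdM u1 u2 u3)
        = (2:ℂ) • ((u1 * u1 + u2 * u2 + u3 * u3) • eta) := by
      rw [two_smul, h, mul_smul]
    exact smul_right_injective _ (two_ne_zero) h2
  -- part 2
  have part2 : mdot (mcomm F 𝒰) 𝒰 = (1/2 : ℂ) • (F - Complex.I • hodge F) := by
    conv_rhs => rw [hFeq, hodge_tfM, half_smul_eq_sdM]
    rw [hcomm, hU, mdot_smul_left, mdot_assoc, hUU, mdot_smul_right, mdot_eta, hn, smul_smul]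
    norm_num
  refine ⟨⟨fun hc => ?_, fun hasd => ?_⟩, part2⟩
  · -- forward: commutator zero → ASD
    have h0 : (1/2 : ℂ) • (F - Complex.I • hodge F) = 0 := by
      rw [← part2, hc, mdot_zero_left]
    have h1 : F - Complex.I • hodge F = 0 := by
      rcases smul_eq_zero.mp h0 with h | h
      · norm_num at h
      · exact h
    have h2 : F = Complex.I • hodge F := by
      rw [sub_eq_zero] at h1; exact h1
    calc hodge F = ((-Complex.I) * Complex.I) • hodge F := by
          rw [neg_mul, Complex.I_mul_I, neg_neg, one_smul]
      _ = (-Complex.I) • (Complex.I • hodge F) := by rw [mul_smul]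
      _ = (-Complex.I) • F := by rw [← h2]
  · -- backward: ASD → commutator zero
    have hh2 : tfM p4 p5 p6 (-p1) (-p2) (-p3)
        = tfM (-Complex.I * p1) (-Complex.I * p2) (-Complex.I * p3)
            (-Complex.I * p4) (-Complex.I * p5) (-Complex.I * p6) := by
      rw [← hodge_tfM, ← hFeq, hasd, hFeq, tfM_smul]
    have hq4 : p4 = -Complex.I * p1 := congrFun (congrFun hh2 0) 1
    have hq5 : p5 = -Complex.I * p2 := congrFun (congrFun hh2 0) 2
    have hq6 : p6 = -Complex.I * p3 := congrFun (congrFun hh2 0) 3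
    have hf1 : (p1 - Complex.I * p4)/2 = 0 := by
      linear_combination (-Complex.I/2) * hq4 + (p1 / 2) * Complex.I_sq
    have hf2 : (p2 - Complex.I * p5)/2 = 0 := by
      linear_combination (-Complex.I/2) * hq5 + (p2 / 2) * Complex.I_sq
    have hf3 : (p3 - Complex.I * p6)/2 = 0 := by
      linear_combination (-Complex.I/2) * hq6 + (p3 / 2) * Complex.I_sq
    rw [hcomm, hf1, hf2, hf3, sdM_zero, mdot_zero_left, smul_zero]
end

section
/- Let α ∈ ℂ satisfy α² = 9Ω² - 4σ. Then: W((3Ω - α)·u + 2·z) = (1/2)·(-Ω + α)·((3Ω - α)·u + 2·z); W((3Ω + α)·u + 2·z) = (1/2)·(-Ω - α)·((3Ω + α)·u + 2·z); and every w ∈ V with B(u,w) = 0 and B(z,w) = 0 satisfies W(w) = Ω·w. (The eigenbivector statements of Proposition 7 of the paper: in a type I space-time with an umbilical structure the Weyl eigenbivectors associated with the eigenvalues (1/2)(-Ω ± α) are proportional to (3Ω ∓ α)𝒰 + 2𝒵, and the eigenbivector for Ω is orthogonal to both 𝒰 and 𝒵.) -/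
/-! On the plane spanned by `u` and `z`, `W` acts by `u ↦ -2Ω u - z` and `z ↦ σ u + Ω z`, so
`a u + 2 z` is an eigenvector exactly when `a² - 6Ω a + 4σ = 0`, whose roots are `3Ω ∓ α`.
Orthogonally to `u` and `z` only the term `Ω·x` of `W` survives. -/

open Module LinearMap

noncomputable section

/-- The endomorphism `W(x) := 3Ω·B(u,x)·u + Ω·x + B(u,x)·z + B(z,x)·u` of `V`,
representing the self-dual Weyl tensor `𝒲 = 3Ω·𝒰⊗𝒰 + Ω·𝒢 + 𝒰⊗̃𝒵` of a space-time
admitting a 2+2 umbilical structure acting on self-dual bivectors. -/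
def Wmap {V : Type*} [AddCommGroup V] [Module ℂ V]
    (B : LinearMap.BilinForm ℂ V) (Ω : ℂ) (u z : V) : V →ₗ[ℂ] V :=
  (3 * Ω) • (B u).smulRight u + Ω • LinearMap.id + (B u).smulRight z + (B z).smulRight u

end

section Wmap

variable {V : Type*} [AddCommGroup V] [Module ℂ V] (B : LinearMap.BilinForm ℂ V) (Ω : ℂ) {u z : V}

theorem Wmap_apply (x : V) :
    Wmap B Ω u z x = (3 * Ω * B u x + B z x) • u + Ω • x + B u x • z := by
  simp only [Wmap, LinearMap.add_apply, LinearMap.smul_apply, LinearMap.id_apply,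
    smulRight_apply]
  match_scalars <;> ring

theorem Wmap_apply_of_orthogonal {w : V} (huw : B u w = 0) (hzw : B z w = 0) :
    Wmap B Ω u z w = Ω • w := by
  simp [Wmap_apply, huw, hzw]

theorem Wmap_apply_left (hu : B u u = -1) (hzu : B z u = 0) :
    Wmap B Ω u z u = (-2 * Ω) • u - z := by
  rw [Wmap_apply, hu, hzu]
  match_scalars <;> ring

theorem Wmap_apply_right (huz : B u z = 0) :
    Wmap B Ω u z z = B z z • u + Ω • z := by
  rw [Wmap_apply, huz]
  match_scalars <;> ring

theorem Wmap_eigenvector_of_root (hu : B u u = -1) (huz : B u z = 0) (hzu : B z u = 0) {a : ℂ}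
    (ha : a ^ 2 - 6 * Ω * a + 4 * B z z = 0) :
    Wmap B Ω u z (a • u + (2 : ℂ) • z) = ((2 * Ω - a) / 2) • (a • u + (2 : ℂ) • z) := by
  rw [map_add, map_smul, map_smul, Wmap_apply_left B Ω hu hzu, Wmap_apply_right B Ω huz]
  match_scalars
  · linear_combination ha / 2
  · ring

end Wmap

theorem weyl_eigenvectors_general
    {V : Type*} [AddCommGroup V] [Module ℂ V]
    (B : LinearMap.BilinForm ℂ V) (hBsym : ∀ x y, B x y = B y x)
    (Ω : ℂ) (u z : V) (hu : B u u = -1) (huz : B u z = 0)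
    (α : ℂ) (hα : α ^ 2 = 9 * Ω ^ 2 - 4 * B z z) :
    Wmap B Ω u z ((3 * Ω - α) • u + (2 : ℂ) • z)
      = ((-Ω + α) / 2) • ((3 * Ω - α) • u + (2 : ℂ) • z) ∧
    Wmap B Ω u z ((3 * Ω + α) • u + (2 : ℂ) • z)
      = ((-Ω - α) / 2) • ((3 * Ω + α) • u + (2 : ℂ) • z) ∧
    (∀ w : V, B u w = 0 → B z w = 0 → Wmap B Ω u z w = Ω • w) := by
  have hzu : B z u = 0 := (hBsym z u).trans huz
  refine ⟨?_, ?_, fun w => Wmap_apply_of_orthogonal B Ω⟩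
  · convert Wmap_eigenvector_of_root B Ω hu huz hzu (a := 3 * Ω - α)
      (by linear_combination hα) using 2
    ring
  · convert Wmap_eigenvector_of_root B Ω hu huz hzu (a := 3 * Ω + α)
      (by linear_combination hα) using 2
    ring

/-- Proposition 7, eigenbivectors in the type I case: for `α` with
`α² = 9Ω² - 4σ`, the vectors `(3Ω ∓ α)u + 2z` are eigenvectors of `W` with eigenvalues
`(1/2)(-Ω ± α)`, and every `w` orthogonal to `u` and `z` satisfies `W(w) = Ω·w`. -/
theorem weyl_eigenvectors
    {V : Type*} [AddCommGroup V] [Module ℂ V] [FiniteDimensional ℂ V]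
    (hdim : finrank ℂ V = 3)
    (B : LinearMap.BilinForm ℂ V) (hBsym : ∀ x y, B x y = B y x)
    (hBnd : B.Nondegenerate)
    (Ω : ℂ) (u z : V) (hu : B u u = -1) (huz : B u z = 0)
    (α : ℂ) (hα : α ^ 2 = 9 * Ω ^ 2 - 4 * B z z) :
    Wmap B Ω u z ((3 * Ω - α) • u + (2 : ℂ) • z)
      = ((-Ω + α) / 2) • ((3 * Ω - α) • u + (2 : ℂ) • z) ∧
    Wmap B Ω u z ((3 * Ω + α) • u + (2 : ℂ) • z)
      = ((-Ω - α) / 2) • ((3 * Ω + α) • u + (2 : ℂ) • z) ∧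
    (∀ w : V, B u w = 0 → B z w = 0 → Wmap B Ω u z w = Ω • w) :=
  weyl_eigenvectors_general B hBsym Ω u z hu huz α hα
end

section
/- Assume Ω = 0, z ≠ 0 and σ = 0. Then W ∘ W ∘ W = 0 and W ∘ W ≠ 0, i.e. W is nilpotent with minimal polynomial of degree three. (The algebraic content of case (ii) of Theorem 4 and of Proposition 3 of the paper: Petrov–Bel type III, with Weyl tensor 𝒲 = 𝒰⊗̃𝒵 and 𝒵 the null eigenbivector.) -/
open Module LinearMap

/-!
With `Ω = 0` the map is `W x = B(u,x) z + B(z,x) u`. Since `z` is null and orthogonal to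
the unit vector `u`, one gets `W z = 0` and `W (W x) = -B(z,x) z`, so `W³ = 0`, while
nondegeneracy gives an `x` with `B(z,x) ≠ 0`, so `W² ≠ 0`.
-/

section Wmap

variable {V : Type*} [AddCommGroup V] [Module ℂ V] (B : LinearMap.BilinForm ℂ V) (u z : V)

theorem Wmap_zero_apply (x : V) : Wmap B 0 u z x = B u x • z + B z x • u := by
  simp [Wmap]

theorem Wmap_zero_apply_self_of_isotropic (huz : B u z = 0) (hσ : B z z = 0) :
    Wmap B 0 u z z = 0 := by
  simp [Wmap_zero_apply, huz, hσ]

theorem Wmap_zero_apply_apply (hu : B u u = -1) (huz : B u z = 0) (hzu : B z u = 0)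
    (hσ : B z z = 0) (x : V) : Wmap B 0 u z (Wmap B 0 u z x) = -B z x • z := by
  simp [Wmap_zero_apply, hu, huz, hzu, hσ]

end Wmap

theorem typeIII_case_general
    {V : Type*} [AddCommGroup V] [Module ℂ V]
    (B : LinearMap.BilinForm ℂ V) (hBsym : ∀ x y, B x y = B y x)
    (hBnd : B.Nondegenerate)
    (Ω : ℂ) (u z : V) (hu : B u u = -1) (huz : B u z = 0)
    (hΩ : Ω = 0) (hz : z ≠ 0) (hσ : B z z = 0) :
    Wmap B Ω u z ∘ₗ Wmap B Ω u z ∘ₗ Wmap B Ω u z = 0 ∧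
    Wmap B Ω u z ∘ₗ Wmap B Ω u z ≠ 0 := by
  subst hΩ
  have hzu : B z u = 0 := hBsym z u ▸ huz
  have hW2 := Wmap_zero_apply_apply B u z hu huz hzu hσ
  constructor
  · ext x
    simp [hW2, Wmap_zero_apply_self_of_isotropic B u z huz hσ]
  · obtain ⟨x, hx⟩ : ∃ x, B z x ≠ 0 := by
      by_contra! h
      exact hz (hBnd.1 z h)
    intro h
    have hx0 : -B z x • z = 0 := by simpa [hW2] using LinearMap.congr_fun h x
    exact smul_ne_zero (neg_ne_zero.mpr hx) hz hx0

/-- Theorem 4 case (ii) and Proposition 3, type III: if `Ω = 0`,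
`z ≠ 0` and `σ = 0` then `W∘W∘W = 0` and `W∘W ≠ 0`. -/
theorem typeIII_case
    {V : Type*} [AddCommGroup V] [Module ℂ V] [FiniteDimensional ℂ V]
    (hdim : finrank ℂ V = 3)
    (B : LinearMap.BilinForm ℂ V) (hBsym : ∀ x y, B x y = B y x)
    (hBnd : B.Nondegenerate)
    (Ω : ℂ) (u z : V) (hu : B u u = -1) (huz : B u z = 0)
    (hΩ : Ω = 0) (hz : z ≠ 0) (hσ : B z z = 0) :
    Wmap B Ω u z ∘ₗ Wmap B Ω u z ∘ₗ Wmap B Ω u z = 0 ∧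
    Wmap B Ω u z ∘ₗ Wmap B Ω u z ≠ 0 :=
  typeIII_case_general B hBsym hBnd Ω u z hu huz hΩ hz hσ
end
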